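/- arXiv:1507.02670 — 2 statements merged into one kernel-verified Lean document; each statement's English description precedes it below -/
import Mathlib

section
/- Let 𝓘 : 𝔖₂ → [0,∞) be a definition of energy (continuous, monotone, degree-2 homogeneous, SO₂-invariant, proper). For every norm s on ℝ², the infimum Ĵ(s) = inf{𝓘(s∘T) : T ∈ SL(2,ℝ)} is attained: there exists T₀ ∈ SL(2,ℝ) with 𝓘(s∘T₀) = Ĵ(s). -/
open Matrix MeasureTheory Real

noncomputable section

/-- The Euclidean plane. -/
abbrev E2 := EuclideanSpace ℝ (Fin 2)

/-- `SL(2,ℝ)` as matrices of determinant one. -/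
abbrev SL2 := Matrix.SpecialLinearGroup (Fin 2) ℝ

/-- The seminorm `v ↦ s (M v)`, i.e. `s ∘ M`. -/
def compM (s : Seminorm ℝ E2) (M : Matrix (Fin 2) (Fin 2) ℝ) : Seminorm ℝ E2 :=
  s.comp (Matrix.toEuclideanLin M)

/-- A seminorm is a norm iff it is positive away from the origin. -/
def IsNorm (s : Seminorm ℝ E2) : Prop := ∀ v : E2, v ≠ 0 → 0 < s v

/-- Monotonicity of a functional on seminorms. -/
def Monot (J : Seminorm ℝ E2 → ℝ) : Prop := ∀ s s' : Seminorm ℝ E2, s' ≤ s → J s' ≤ J s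

/-- Degree 2 homogeneity of a functional on seminorms. -/
def Homog (J : Seminorm ℝ E2 → ℝ) : Prop :=
  ∀ (c : NNReal) (s : Seminorm ℝ E2), J (c • s) = (c : ℝ) ^ 2 * J s

/-- `SL₂`-invariance of a functional on seminorms. -/
def SL2inv (J : Seminorm ℝ E2 → ℝ) : Prop :=
  ∀ (s : Seminorm ℝ E2) (T : SL2), J (compM s (T : Matrix (Fin 2) (Fin 2) ℝ)) = J s

/-- The Reshetnyak energy `I²₊(s) = max_{v ∈ S¹} s(v)²`. -/
def Iplus (s : Seminorm ℝ E2) : ℝ := ⨆ v : Metric.sphere (0 : E2) 1, (s (v : E2)) ^ 2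

/-- The unit ball of a seminorm. -/
def unitBallS (s : Seminorm ℝ E2) : Set E2 := {v | s v ≤ 1}

/-- The ellipse `M(D̄)` is inscribed in the unit ball of `s`. -/
def ellipseIn (s : Seminorm ℝ E2) (M : Matrix (Fin 2) (Fin 2) ℝ) : Prop :=
  (Matrix.toEuclideanLin M) '' (Metric.closedBall 0 1) ⊆ unitBallS s

/-- The area of the largest ellipse inscribed in the unit ball of `s`
(the area of the Loewner ellipse); the ellipse `M(D̄)` has area `π |det M|`. -/
def LoewnerArea (s : Seminorm ℝ E2) : ℝ :=
  sSup {a : ℝ | ∃ M : Matrix (Fin 2) (Fin 2) ℝ, ellipseIn s M ∧ a = π * |M.det|}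

/-- The inscribed Riemannian (Ivanov) Jacobian `J^i(s) = π / |L|`. -/
def Ji (s : Seminorm ℝ E2) : ℝ := π / LoewnerArea s

/-- `s` is isotropic: some round disc `t·D̄` is inscribed in the unit ball of `s` and has at
least the area of every inscribed ellipse, i.e. the Loewner ellipse is a round disc. -/
def Isotropic (s : Seminorm ℝ E2) : Prop :=
  ∃ t : ℝ, 0 < t ∧ Metric.closedBall (0 : E2) t ⊆ unitBallS s ∧
    ∀ M : Matrix (Fin 2) (Fin 2) ℝ, ellipseIn s M → π * |M.det| ≤ π * t ^ 2

/-- A Jacobian (definition of area): monotone, degree-2 homogeneous, `SL₂`-invariant,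
normalized on the Euclidean norm. -/
def IsJacobian (J : Seminorm ℝ E2 → ℝ) : Prop :=
  (∀ s, 0 ≤ J s) ∧ Monot J ∧ Homog J ∧ SL2inv J ∧ J (normSeminorm ℝ E2) = 1

/-- Continuity with respect to the sup-metric `d(s,s') = max_{v ∈ S¹} |s v - s' v|`. -/
def ContinuousSN (I : Seminorm ℝ E2 → ℝ) : Prop :=
  ∀ s : Seminorm ℝ E2, ∀ ε > (0 : ℝ), ∃ δ > (0 : ℝ), ∀ s' : Seminorm ℝ E2,
    (∀ v : E2, ‖v‖ = 1 → |s' v - s v| ≤ δ) → |I s' - I s| ≤ ε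

/-- `SO₂`-invariance of a functional on seminorms. -/
def SO2inv (I : Seminorm ℝ E2 → ℝ) : Prop :=
  ∀ (s : Seminorm ℝ E2) (T : Matrix (Fin 2) (Fin 2) ℝ),
    T ∈ Matrix.orthogonalGroup (Fin 2) ℝ → T.det = 1 → I (compM s T) = I s

/-- Properness: the sublevel set `I⁻¹([0,1])` is (sequentially) compact with respect to the
sup-metric on the unit circle. -/
def ProperEnergy (I : Seminorm ℝ E2 → ℝ) : Prop :=
  ∀ f : ℕ → Seminorm ℝ E2, (∀ n, I (f n) ≤ 1) →
    ∃ (s : Seminorm ℝ E2) (φ : ℕ → ℕ), StrictMono φ ∧ I s ≤ 1 ∧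
      Filter.Tendsto (fun n => ⨆ v : Metric.sphere (0 : E2) 1, |f (φ n) (v : E2) - s (v : E2)|)
        Filter.atTop (nhds 0)

/-- A (conformally invariant) definition of energy. -/
def IsEnergy (I : Seminorm ℝ E2 → ℝ) : Prop :=
  (∀ s, 0 ≤ I s) ∧ ContinuousSN I ∧ Monot I ∧ Homog I ∧ SO2inv I ∧ ProperEnergy I

/-! The function `M ↦ 𝓘(s ∘ M)` on matrices is continuous, since `s ∘ M` depends uniformly on
`M` on the unit circle. Properness and homogeneity bound every sublevel set of `𝓘` uniformly on
the circle, and `s` dominates a multiple of the Euclidean norm, so `{M : 𝓘(s ∘ M) ≤ t}` is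
bounded in operator norm. Hence `{T ∈ SL₂(ℝ) : 𝓘(s ∘ T) ≤ 𝓘(s)}` is compact, and the minimum of
`T ↦ 𝓘(s ∘ T)` over it is the minimum over all of `SL₂(ℝ)`. -/

open scoped Matrix.Norms.L2Operator

namespace Seminorm

variable {E : Type*} [NormedAddCommGroup E] [NormedSpace ℝ E] [FiniteDimensional ℝ E]

theorem continuous_of_finiteDimensional (p : Seminorm ℝ E) : Continuous p :=
  continuousOn_univ.mp (p.convexOn.continuousOn isOpen_univ)

theorem exists_pos_mul_norm_le [Nontrivial E] (p : Seminorm ℝ E) (hp : ∀ v, v ≠ 0 → 0 < p v) :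
    ∃ α > 0, ∀ v, α * ‖v‖ ≤ p v := by
  obtain ⟨v₀, hv₀, hmin⟩ := (isCompact_sphere (0 : E) 1).exists_isMinOn
    (NormedSpace.sphere_nonempty.mpr zero_le_one) p.continuous_of_finiteDimensional.continuousOn
  have hv₀ : ‖v₀‖ = 1 := mem_sphere_zero_iff_norm.mp hv₀
  refine ⟨p v₀, hp v₀ (norm_ne_zero_iff.mp (by simp [hv₀])), fun v => ?_⟩
  rcases eq_or_ne v 0 with rfl | hv
  · simp
  have hnv : 0 < ‖v‖ := norm_pos_iff.mpr hv
  have hunit : ‖v‖⁻¹ • v ∈ Metric.sphere (0 : E) 1 := by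
    simp [norm_smul, hnv.ne']
  calc p v₀ * ‖v‖ ≤ p (‖v‖⁻¹ • v) * ‖v‖ := by gcongr; exact hmin hunit
    _ = p v := by rw [map_smul_eq_mul, norm_inv, norm_norm]; field_simp

theorem abs_sub_le_iSup_sphere (p q : Seminorm ℝ E) {v : E} (hv : ‖v‖ = 1) :
    |p v - q v| ≤ ⨆ u : Metric.sphere (0 : E) 1, |p u - q u| := by
  have hcont : Continuous fun u => |p u - q u| :=
    (p.continuous_of_finiteDimensional.sub q.continuous_of_finiteDimensional).abs
  have hbdd := (isCompact_sphere (0 : E) 1).bddAbove_image hcont.continuousOn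
  rw [Set.image_eq_range] at hbdd
  exact le_ciSup hbdd ⟨v, mem_sphere_zero_iff_norm.mpr hv⟩

end Seminorm

theorem Matrix.norm_toEuclideanLin_apply_le {𝕜 m n : Type*} [RCLike 𝕜] [Fintype m] [Fintype n]
    [DecidableEq n] (M : Matrix m n 𝕜) (v : EuclideanSpace 𝕜 n) :
    ‖toEuclideanLin M v‖ ≤ ‖M‖ * ‖v‖ :=
  ((toEuclideanLin.trans LinearMap.toContinuousLinearMap) M).le_opNorm v

section Energy

variable {I : Seminorm ℝ E2 → ℝ}

theorem ContinuousSN.continuous_compM (hI : ContinuousSN I) (s : Seminorm ℝ E2) :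
    Continuous fun M : Matrix (Fin 2) (Fin 2) ℝ => I (compM s M) := by
  obtain ⟨C, hC, hsC⟩ := s.bound_of_continuous_normedSpace s.continuous_of_finiteDimensional
  refine Metric.continuous_iff.mpr fun A ε hε => ?_
  obtain ⟨δ, hδ, hIδ⟩ := hI (compM s A) (ε / 2) (half_pos hε)
  refine ⟨δ / C, div_pos hδ hC, fun M hMA => ?_⟩
  have hclose : ∀ v : E2, ‖v‖ = 1 → |compM s M v - compM s A v| ≤ δ := fun v hv =>
    calc |compM s M v - compM s A v|
        ≤ s (toEuclideanLin M v - toEuclideanLin A v) := s.norm_sub_map_le_sub _ _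
      _ = s (toEuclideanLin (M - A) v) := by rw [map_sub toEuclideanLin, LinearMap.sub_apply]
      _ ≤ C * ‖toEuclideanLin (M - A) v‖ := hsC _
      _ ≤ C * (‖M - A‖ * ‖v‖) := by gcongr; exact (M - A).norm_toEuclideanLin_apply_le v
      _ ≤ δ := by
        rw [hv, mul_one, ← dist_eq_norm, ← le_div_iff₀' hC]; exact hMA.le
  rw [Real.dist_eq]
  exact (hIδ _ hclose).trans_lt (half_lt_self hε)

theorem ProperEnergy.exists_sphere_bound (hI : ProperEnergy I) :
    ∃ B, ∀ p, I p ≤ 1 → ∀ v : E2, ‖v‖ = 1 → p v ≤ B := by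
  by_contra! h
  choose p hp v hv hpv using fun n : ℕ => h n
  obtain ⟨q, φ, hφ, -, hq⟩ := hI p hp
  obtain ⟨C, -, hqC⟩ := q.bound_of_continuous_normedSpace q.continuous_of_finiteDimensional
  obtain ⟨n, hclose, hn⟩ :=
    ((hq.eventually (eventually_lt_nhds one_pos)).and (Filter.eventually_ge_atTop ⌈C + 1⌉₊)).exists
  have hφn : C + 1 ≤ φ n := (Nat.ceil_le.mp hn).trans (by exact_mod_cast hφ.le_apply)
  have hpq := (Seminorm.abs_sub_le_iSup_sphere (p (φ n)) q (hv (φ n))).trans hclose.le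
  have hqv := hqC (v (φ n))
  rw [hv, mul_one] at hqv
  linarith [hpv (φ n), (abs_le.mp hpq).2]

theorem ProperEnergy.exists_sphere_bound_of_le (hprop : ProperEnergy I) (hhom : Homog I) (t : ℝ) :
    ∃ B, ∀ p, I p ≤ t → ∀ v : E2, ‖v‖ = 1 → p v ≤ B := by
  obtain ⟨B, hB⟩ := hprop.exists_sphere_bound
  refine ⟨B * (|t| + 1), fun p hp v hv => ?_⟩
  have ht : (0 : ℝ) < |t| + 1 := by positivity
  let c : NNReal := ⟨(|t| + 1)⁻¹, by positivity⟩
  have hc : I (c • p) ≤ 1 := by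
    rw [hhom]
    calc ((|t| + 1)⁻¹) ^ 2 * I p ≤ ((|t| + 1)⁻¹) ^ 2 * (|t| + 1) := by
          gcongr; linarith [le_abs_self t]
      _ ≤ 1 := by
          rw [sq, mul_assoc, inv_mul_cancel₀ ht.ne', mul_one]
          exact inv_le_one_of_one_le₀ (le_add_of_nonneg_left (abs_nonneg t))
  have hcp : (|t| + 1)⁻¹ * p v ≤ B := hB _ hc v hv
  rwa [inv_mul_le_iff₀ ht, mul_comm] at hcp

theorem IsNorm.exists_norm_le_of_energy_compM_le {s : Seminorm ℝ E2} (hs : IsNorm s)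
    (hprop : ProperEnergy I) (hhom : Homog I) (t : ℝ) :
    ∃ R, ∀ M : Matrix (Fin 2) (Fin 2) ℝ, I (compM s M) ≤ t → ‖M‖ ≤ R := by
  obtain ⟨α, hα, hαs⟩ := s.exists_pos_mul_norm_le hs
  obtain ⟨B, hB⟩ := hprop.exists_sphere_bound_of_le hhom t
  refine ⟨max B 0 / α, fun M hM => ?_⟩
  refine ContinuousLinearMap.opNorm_le_of_unit_norm (by positivity) fun v hv => ?_
  rw [le_div_iff₀' hα]
  exact (hαs _).trans ((hB _ hM v hv).trans (le_max_left B 0))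

end Energy

/-- For a norm `s`, the infimum of `I(s ∘ T)` over `T ∈ SL(2,ℝ)` is attained. -/
theorem stmt12 (I : Seminorm ℝ E2 → ℝ) (hI : IsEnergy I)
    (s : Seminorm ℝ E2) (hs : IsNorm s) :
    ∃ T₀ : SL2, ∀ T : SL2,
      I (compM s (T₀ : Matrix (Fin 2) (Fin 2) ℝ)) ≤ I (compM s (T : Matrix (Fin 2) (Fin 2) ℝ)) := by
  obtain ⟨-, hcont, -, hhom, -, hprop⟩ := hI
  set F : Matrix (Fin 2) (Fin 2) ℝ → ℝ := fun M => I (compM s M)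
  have hF : Continuous F := hcont.continuous_compM s
  obtain ⟨R, hR⟩ := hs.exists_norm_le_of_energy_compM_le hprop hhom (F 1)
  set K := {M : Matrix (Fin 2) (Fin 2) ℝ | M.det = 1 ∧ F M ≤ F 1}
  have hK : IsCompact K :=
    (isCompact_closedBall 0 R).of_isClosed_subset
      ((isClosed_eq (continuous_id.matrix_det) continuous_const).inter
        (isClosed_le hF continuous_const))
      fun M hM => mem_closedBall_zero_iff.mpr (hR M hM.2)
  obtain ⟨T₀, hT₀, hmin⟩ := hK.exists_isMinOn ⟨1, det_one, le_rfl⟩ hF.continuousOn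
  refine ⟨⟨T₀, hT₀.1⟩, fun T => ?_⟩
  by_cases hT : F T ≤ F 1
  · exact hmin ⟨T.prop, hT⟩
  · exact (hmin ⟨det_one, le_rfl⟩).trans (le_of_not_ge hT)
end
end

section
/- Let 𝓘 be a definition of energy on seminorms of ℝ² and define Ĵ(s) = inf{𝓘(s∘T) : T ∈ SL(2,ℝ)}. Then Ĵ is SL₂-invariant, monotone (s ≥ s' ⟹ Ĵ(s) ≥ Ĵ(s')), and homogeneous of degree 2 (Ĵ(λs) = λ²Ĵ(s) for λ ≥ 0); moreover Ĵ(s₀) > 0 for the Euclidean norm s₀, so J(s) := Ĵ(s)/Ĵ(s₀) is a Jacobian (definition of area). -/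
open Matrix MeasureTheory Real

noncomputable section

/-- `Ĵ(s) = inf {I(s ∘ T) : T ∈ SL(2,ℝ)}`. -/
def Jhat (I : Seminorm ℝ E2 → ℝ) (s : Seminorm ℝ E2) : ℝ :=
  ⨅ T : SL2, I (compM s (T : Matrix (Fin 2) (Fin 2) ℝ))

lemma compM_apply (s : Seminorm ℝ E2) (M : Matrix (Fin 2) (Fin 2) ℝ) (v : E2) :
    compM s M v = s (Matrix.toEuclideanLin M v) := rfl

lemma seminorm_bound (s : Seminorm ℝ E2) : ∃ C, 0 ≤ C ∧ ∀ v : E2, ‖v‖ = 1 → s v ≤ C := by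
  refine ⟨s (EuclideanSpace.single 0 1) + s (EuclideanSpace.single 1 1),
    by positivity, fun v hv => ?_⟩
  have hdecomp : v = v 0 • EuclideanSpace.single 0 (1:ℝ) + v 1 • EuclideanSpace.single 1 1 := by
    ext j; fin_cases j <;> simp [EuclideanSpace.single_apply]
  have h1 : v 0 ^ 2 + v 1 ^ 2 = 1 := by
    have := EuclideanSpace.norm_eq v
    rw [hv] at this
    have h2 : (1:ℝ) ^ 2 = (√(∑ i : Fin 2, ‖v i‖ ^ 2)) ^ 2 := by rw [← this]
    rw [Real.sq_sqrt (by positivity)] at h2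
    simp only [Real.norm_eq_abs, sq_abs, Fin.sum_univ_two] at h2
    linarith
  have hcoord : ∀ i : Fin 2, |v i| ≤ 1 := by
    intro i
    fin_cases i
    · show |v 0| ≤ 1
      rw [abs_le]; constructor <;> nlinarith [sq_nonneg (v 1)]
    · show |v 1| ≤ 1
      rw [abs_le]; constructor <;> nlinarith [sq_nonneg (v 0)]
  calc s v = s (v 0 • EuclideanSpace.single 0 (1:ℝ) + v 1 • EuclideanSpace.single 1 1) := by
        rw [← hdecomp]
    _ ≤ s (v 0 • EuclideanSpace.single 0 (1:ℝ)) + s (v 1 • EuclideanSpace.single 1 1) :=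
        map_add_le_add s _ _
    _ = |v 0| * s (EuclideanSpace.single 0 1) + |v 1| * s (EuclideanSpace.single 1 1) := by
        rw [map_smul_eq_mul, map_smul_eq_mul]; simp [Real.norm_eq_abs]
    _ ≤ 1 * s (EuclideanSpace.single 0 1) + 1 * s (EuclideanSpace.single 1 1) :=
        add_le_add (mul_le_mul_of_nonneg_right (hcoord 0) (apply_nonneg s _))
          (mul_le_mul_of_nonneg_right (hcoord 1) (apply_nonneg s _))
    _ = _ := by ring

lemma exists_unit_ge_one (T : SL2) :
    ∃ v : E2, ‖v‖ = 1 ∧ 1 ≤ ‖Matrix.toEuclideanLin (T : Matrix (Fin 2) (Fin 2) ℝ) v‖ := by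
  set M : Matrix (Fin 2) (Fin 2) ℝ := (T : Matrix (Fin 2) (Fin 2) ℝ) with hM
  have hdet : M.det = 1 := T.2
  rw [Matrix.det_fin_two] at hdet
  have hcol : ∀ i : Fin 2,
      ‖Matrix.toEuclideanLin M (EuclideanSpace.single i (1:ℝ))‖ ^ 2 = M 0 i ^ 2 + M 1 i ^ 2 := by
    intro i
    rw [EuclideanSpace.norm_eq, Real.sq_sqrt (by positivity)]
    have hc : ∀ j : Fin 2, Matrix.toEuclideanLin M (EuclideanSpace.single i (1:ℝ)) j = M j i := by
      intro j
      simp [Matrix.toEuclideanLin_apply, Matrix.mulVec, dotProduct, Fin.sum_univ_two,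
        EuclideanSpace.single_apply]
    simp [Fin.sum_univ_two, hc, sq_abs]
  set a := ‖Matrix.toEuclideanLin M (EuclideanSpace.single 0 (1:ℝ))‖ with ha
  set b := ‖Matrix.toEuclideanLin M (EuclideanSpace.single 1 (1:ℝ))‖ with hb
  have ha0 : 0 ≤ a := norm_nonneg _
  have hb0 : 0 ≤ b := norm_nonneg _
  have ha2 : a ^ 2 = M 0 0 ^ 2 + M 1 0 ^ 2 := hcol 0
  have hb2 : b ^ 2 = M 0 1 ^ 2 + M 1 1 ^ 2 := hcol 1
  have hprod : 1 ≤ a ^ 2 * b ^ 2 := by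
    rw [ha2, hb2]; nlinarith [sq_nonneg (M 0 0 * M 0 1 + M 1 0 * M 1 1)]
  have h1 : 1 ≤ a ∨ 1 ≤ b := by
    by_contra h
    push_neg at h
    have h2 : a ^ 2 < 1 := by nlinarith
    have h3 : b ^ 2 < 1 := by nlinarith
    nlinarith [sq_nonneg a, sq_nonneg b]
  rcases h1 with h | h
  · exact ⟨EuclideanSpace.single 0 1, by simp, h⟩
  · exact ⟨EuclideanSpace.single 1 1, by simp, h⟩

lemma compM_mul (s : Seminorm ℝ E2) (A B : Matrix (Fin 2) (Fin 2) ℝ) :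
    compM (compM s A) B = compM s (A * B) := by
  ext v
  simp [compM_apply, Matrix.toEuclideanLin_apply, Matrix.mulVec_mulVec]

lemma compM_smul (c : NNReal) (s : Seminorm ℝ E2) (M : Matrix (Fin 2) (Fin 2) ℝ) :
    compM (c • s) M = c • compM s M := by
  ext v; simp [compM_apply, Seminorm.smul_apply]

lemma jhat_nonneg (I : Seminorm ℝ E2 → ℝ) (hnn : ∀ s, 0 ≤ I s) (s : Seminorm ℝ E2) :
    0 ≤ Jhat I s := Real.iInf_nonneg fun _ => hnn _

lemma jhat_bdd (I : Seminorm ℝ E2 → ℝ) (hnn : ∀ s, 0 ≤ I s) (s : Seminorm ℝ E2) :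
    BddBelow (Set.range fun T : SL2 => I (compM s (T : Matrix (Fin 2) (Fin 2) ℝ))) := by
  refine ⟨0, ?_⟩; rintro _ ⟨T, rfl⟩; exact hnn _

lemma jhat_sl2inv (I : Seminorm ℝ E2 → ℝ) : SL2inv (Jhat I) := by
  intro s T
  unfold Jhat
  have h1 : ∀ T' : SL2, compM (compM s (T : Matrix (Fin 2) (Fin 2) ℝ)) T'
      = compM s ((T * T' : SL2) : Matrix (Fin 2) (Fin 2) ℝ) := by
    intro T'; rw [compM_mul]; rfl
  simp_rw [h1]
  exact (Equiv.mulLeft T).surjective.iInf_comp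
    (fun T'' : SL2 => I (compM s (T'' : Matrix (Fin 2) (Fin 2) ℝ)))

lemma jhat_monot (I : Seminorm ℝ E2 → ℝ) (hnn : ∀ s, 0 ≤ I s) (hm : Monot I) :
    Monot (Jhat I) := by
  intro s s' hle
  exact ciInf_mono (jhat_bdd I hnn s') fun T => hm _ _ (fun v => hle _)

lemma jhat_homog (I : Seminorm ℝ E2 → ℝ) (hh : Homog I) : Homog (Jhat I) := by
  intro c s
  unfold Jhat
  rw [Real.mul_iInf_of_nonneg (by positivity)]
  congr 1; ext T
  rw [compM_smul, hh]

lemma jhat_pos (I : Seminorm ℝ E2 → ℝ) (hI : IsEnergy I) :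
    0 < Jhat I (normSeminorm ℝ E2) := by
  obtain ⟨hnn, _, _, hhom, _, hprop⟩ := hI
  rcases lt_or_ge 0 (Jhat I (normSeminorm ℝ E2)) with h | h
  · exact h
  exfalso
  have h0 : Jhat I (normSeminorm ℝ E2) = 0 :=
    le_antisymm h (jhat_nonneg I hnn _)
  have hex : ∀ n : ℕ, ∃ T : SL2,
      I (compM (normSeminorm ℝ E2) (T : Matrix (Fin 2) (Fin 2) ℝ)) < (1 / (n + 1 : ℝ)) ^ 2 := by
    intro n
    apply exists_lt_of_ciInf_lt
    rw [show (⨅ T : SL2, I (compM (normSeminorm ℝ E2) (T : Matrix (Fin 2) (Fin 2) ℝ)))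
      = Jhat I (normSeminorm ℝ E2) from rfl, h0]
    positivity
  choose T hT using hex
  set f : ℕ → Seminorm ℝ E2 :=
    fun n => ((n + 1 : NNReal)) • compM (normSeminorm ℝ E2) (T n : Matrix (Fin 2) (Fin 2) ℝ)
    with hf
  have hf1 : ∀ n, I (f n) ≤ 1 := by
    intro n
    rw [hf]
    simp only []
    rw [hhom]
    have hn1 : ((n + 1 : NNReal) : ℝ) = (n : ℝ) + 1 := by push_cast; ring
    have hpos : (0:ℝ) < (n : ℝ) + 1 := by positivity
    have := hT n
    calc ((n + 1 : NNReal) : ℝ) ^ 2 * I (compM (normSeminorm ℝ E2) (T n : Matrix (Fin 2) (Fin 2) ℝ))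
        ≤ ((n : ℝ) + 1) ^ 2 * (1 / ((n : ℝ) + 1)) ^ 2 := by
          rw [hn1]
          exact mul_le_mul_of_nonneg_left (le_of_lt this) (by positivity)
      _ = 1 := by field_simp
  obtain ⟨s, φ, hφ, _, htend⟩ := hprop f hf1
  obtain ⟨C, hC0, hC⟩ := seminorm_bound s
  have hev := htend.eventually_lt_const one_pos
  rw [Filter.eventually_atTop] at hev
  obtain ⟨N, hN⟩ := hev
  obtain ⟨m, hm⟩ := exists_nat_ge (C + 1)
  set n := max N m with hn
  have hsup := hN n (le_max_left _ _)
  -- find a unit vector where f (φ n) is large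
  obtain ⟨v₀, hv₀norm, hv₀⟩ := exists_unit_ge_one (T (φ n))
  have hv₀s : v₀ ∈ Metric.sphere (0 : E2) 1 := by
    simp [mem_sphere_zero_iff_norm, hv₀norm]
  -- value of f (φ n) at v₀
  have hfval : f (φ n) v₀ = ((φ n : ℝ) + 1) *
      ‖Matrix.toEuclideanLin (T (φ n) : Matrix (Fin 2) (Fin 2) ℝ) v₀‖ := by
    rw [hf]
    simp [Seminorm.smul_apply, compM_apply, NNReal.smul_def]
  have hflarge : ((φ n : ℝ) + 1) ≤ f (φ n) v₀ := by
    rw [hfval]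
    nth_rewrite 1 [← mul_one ((φ n : ℝ) + 1)]
    exact mul_le_mul_of_nonneg_left hv₀ (by positivity)
  -- bddAbove for the sup
  obtain ⟨C', hC'0, hC'⟩ := seminorm_bound (f (φ n))
  have hbdd : BddAbove (Set.range fun v : Metric.sphere (0 : E2) 1 =>
      |f (φ n) (v : E2) - s (v : E2)|) := by
    refine ⟨C' + C, ?_⟩
    rintro _ ⟨⟨v, hv⟩, rfl⟩
    have hvn : ‖v‖ = 1 := by simpa [mem_sphere_zero_iff_norm] using hv
    have := abs_sub_abs_le_abs_sub (f (φ n) v) (s v)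
    rw [abs_sub_le_iff]
    constructor
    · have := hC' v hvn
      have := apply_nonneg s v
      linarith
    · have := hC v hvn
      have := apply_nonneg (f (φ n)) v
      linarith
  have hle : |f (φ n) v₀ - s v₀| ≤
      ⨆ v : Metric.sphere (0 : E2) 1, |f (φ n) (v : E2) - s (v : E2)| :=
    le_ciSup hbdd (⟨v₀, hv₀s⟩ : Metric.sphere (0 : E2) 1)
  have hsv₀ : s v₀ ≤ C := hC v₀ hv₀norm
  have hphin : (n : ℝ) ≤ (φ n : ℝ) := by exact_mod_cast hφ.le_apply
  have hmn : C + 1 ≤ (n : ℝ) := le_trans hm (by exact_mod_cast le_max_right N m)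
  have : f (φ n) v₀ - s v₀ ≤ |f (φ n) v₀ - s v₀| := le_abs_self _
  linarith [hle, hsup, hflarge, hsv₀]


/-- `Ĵ` is `SL₂`-invariant, monotone, degree-2 homogeneous, positive on the Euclidean norm,
and its normalization is a Jacobian. -/
theorem stmt14 (I : Seminorm ℝ E2 → ℝ) (hI : IsEnergy I) :
    SL2inv (Jhat I) ∧ Monot (Jhat I) ∧ Homog (Jhat I) ∧
      0 < Jhat I (normSeminorm ℝ E2) ∧
      IsJacobian (fun s => Jhat I s / Jhat I (normSeminorm ℝ E2)) := by
  obtain ⟨hnn, hcont, hmono, hhom, hso, hprop⟩ := hI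
  have hpos := jhat_pos I ⟨hnn, hcont, hmono, hhom, hso, hprop⟩
  refine ⟨jhat_sl2inv I, jhat_monot I hnn hmono, jhat_homog I hhom, hpos, ?_, ?_, ?_, ?_, ?_⟩
  · exact fun s => div_nonneg (jhat_nonneg I hnn s) hpos.le
  · exact fun s s' h => (div_le_div_iff_of_pos_right hpos).mpr (jhat_monot I hnn hmono s s' h)
  · intro c s
    simp only []
    rw [jhat_homog I hhom, mul_div_assoc]
  · intro s T
    simp only []
    rw [jhat_sl2inv I s T]
  · exact div_self hpos.ne'

end
end
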